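/- If Q denotes the quantum neural tangent kernel k_{i,i'}^{m,m} = Σ_l (d ŷ_{i,m}/dθ_l)(d ŷ_{i',m}/dθ_l) with outputs ŷ_{i,m} = Tr[ρ_{x_i,θ} O_m] of a unitary parameterized circuit on n qubits with pure initial state, and k_QF^S is the SLD quantum Fisher kernel with quantum Fisher information matrix replaced by the identity, then k_QF^S(x_i, x_{i'}) = 2^{2−n} Σ_m k_{i,i'}^{m,m}, where the sum runs over all 4ⁿ Pauli strings O_m ∈ {I,X,Y,Z}^{⊗n}. -/
import Mathlib


open Matrix
open scoped ComplexOrder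

/-- The four single-qubit Pauli matrices `I, X, Y, Z`. -/
noncomputable def pauli : Fin 4 → Matrix (Fin 2) (Fin 2) ℂ
  | 0 => 1
  | 1 => !![0, 1; 1, 0]
  | 2 => !![0, -Complex.I; Complex.I, 0]
  | 3 => !![1, 0; 0, -1]

/-- The `n`-qubit Pauli string `⊗_q pauli (s q)` (entrywise tensor-product formula). -/
noncomputable def pauliString {n : ℕ} (s : Fin n → Fin 4) :
    Matrix (Fin n → Fin 2) (Fin n → Fin 2) ℂ :=
  fun i j => ∏ q : Fin n, pauli (s q) (i q) (j q)

lemma pauli_single (a b c d : Fin 2) :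
    ∑ m : Fin 4, pauli m a b * pauli m c d = if a = d ∧ b = c then 2 else 0 := by
  fin_cases a <;> fin_cases b <;> fin_cases c <;> fin_cases d <;>
    simp [pauli, Fin.sum_univ_four, Matrix.one_apply, Complex.I_mul_I] <;> ring_nf <;>
    simp [Complex.I_sq]

lemma pauli_sum (n : ℕ) (i j k l : Fin n → Fin 2) :
    ∑ s : Fin n → Fin 4,
      (∏ q, pauli (s q) (j q) (i q)) * (∏ q, pauli (s q) (l q) (k q))
      = if j = k ∧ i = l then (2 : ℂ) ^ n else 0 := by
  have h1 : ∀ s : Fin n → Fin 4,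
      (∏ q, pauli (s q) (j q) (i q)) * (∏ q, pauli (s q) (l q) (k q))
        = ∏ q, (pauli (s q) (j q) (i q) * pauli (s q) (l q) (k q)) := fun s =>
    (Finset.prod_mul_distrib).symm
  simp_rw [h1]
  rw [← Fintype.prod_sum fun q (m : Fin 4) => pauli m (j q) (i q) * pauli m (l q) (k q)]
  simp_rw [pauli_single]
  by_cases h : j = k ∧ i = l
  · obtain ⟨h1, h2⟩ := h
    subst h1; subst h2
    simp
  · rw [if_neg h]
    have hq : ∃ q, ¬(j q = k q ∧ i q = l q) := by
      by_contra hc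
      push_neg at hc
      exact h ⟨funext fun q => (hc q).1, funext fun q => (hc q).2⟩
    obtain ⟨q, hqq⟩ := hq
    exact Finset.prod_eq_zero (Finset.mem_univ q) (if_neg hqq)


lemma pauli_trace_expand {n : ℕ} (A B : Matrix (Fin n → Fin 2) (Fin n → Fin 2) ℂ) :
    ∑ s : Fin n → Fin 4, (A * pauliString s).trace * (B * pauliString s).trace
      = (2 : ℂ) ^ n * (A * B).trace := by
  have htr : ∀ (M : Matrix (Fin n → Fin 2) (Fin n → Fin 2) ℂ) (s : Fin n → Fin 4),
      (M * pauliString s).trace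
        = ∑ p : (Fin n → Fin 2) × (Fin n → Fin 2), M p.1 p.2 * pauliString s p.2 p.1 := by
    intro M s
    rw [Fintype.sum_prod_type]
    simp [Matrix.trace, Matrix.mul_apply]
  simp_rw [htr, Finset.sum_mul_sum]
  rw [Finset.sum_comm]
  have hinner : ∀ p : (Fin n → Fin 2) × (Fin n → Fin 2),
      (∑ s : Fin n → Fin 4, ∑ r : (Fin n → Fin 2) × (Fin n → Fin 2),
        A p.1 p.2 * pauliString s p.2 p.1 * (B r.1 r.2 * pauliString s r.2 r.1))
      = (2 : ℂ) ^ n * (A p.1 p.2 * B p.2 p.1) := by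
    intro p
    rw [Finset.sum_comm]
    have h2 : ∀ r : (Fin n → Fin 2) × (Fin n → Fin 2),
        (∑ s : Fin n → Fin 4,
          A p.1 p.2 * pauliString s p.2 p.1 * (B r.1 r.2 * pauliString s r.2 r.1))
        = A p.1 p.2 * B r.1 r.2 *
            (if p.2 = r.1 ∧ p.1 = r.2 then (2 : ℂ) ^ n else 0) := by
      intro r
      rw [← pauli_sum n p.1 p.2 r.1 r.2, Finset.mul_sum]
      exact Finset.sum_congr rfl fun s _ => by unfold pauliString; ring
    simp_rw [h2]
    have hcond : ∀ r : (Fin n → Fin 2) × (Fin n → Fin 2),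
        (p.2 = r.1 ∧ p.1 = r.2) ↔ ((p.2, p.1) = r) := by
      intro r
      constructor
      · rintro ⟨h1, h2⟩; exact Prod.ext h1 h2
      · rintro rfl; exact ⟨rfl, rfl⟩
    simp_rw [hcond, mul_ite, mul_zero, Finset.sum_ite_eq]
    simp [mul_comm]
  simp_rw [hinner]
  rw [← Finset.mul_sum]
  congr 1
  rw [Fintype.sum_prod_type]
  simp [Matrix.trace, Matrix.mul_apply]

/-- Let `ρx, ρx'` be the parameterized states `U(x,θ)ρ₀U†(x,θ)` of a unitary
circuit on `n` qubits with pure initial state `ρ₀`, with partial-derivative matrices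
`D l = ∂_{θ_l} ρx` and `D' l = ∂_{θ_l} ρx'` at the parameter point `θ`.  The SLD quantum
Fisher kernel with quantum Fisher information matrix replaced by the identity,
`k_QF^S = Σ_l Tr[(2∂_{θ_l}ρx)(2∂_{θ_l}ρx')]`, equals `2^{2−n}` times the sum over all `4ⁿ`
Pauli-string observables `O_m` of the quantum neural tangent kernels
`k^{m,m} = Σ_l (dŷ_m/dθ_l)(dŷ'_m/dθ_l)`, where `dŷ_m/dθ_l = Tr[∂_{θ_l}ρx · O_m]`. -/
theorem sldqfk_eq_sum_qntk (n npar : ℕ) (θ : Fin npar → ℝ)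
    (ρ₀ : Matrix (Fin n → Fin 2) (Fin n → Fin 2) ℂ)
    (hρ : ρ₀.PosSemidef) (hρtr : ρ₀.trace = 1) (hρpure : ρ₀ * ρ₀ = ρ₀)
    (U U' : (Fin npar → ℝ) → Matrix (Fin n → Fin 2) (Fin n → Fin 2) ℂ)
    (hU : ∀ v, U v ∈ Matrix.unitaryGroup (Fin n → Fin 2) ℂ)
    (hU' : ∀ v, U' v ∈ Matrix.unitaryGroup (Fin n → Fin 2) ℂ)
    (ρx ρx' : (Fin npar → ℝ) → Matrix (Fin n → Fin 2) (Fin n → Fin 2) ℂ)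
    (hρx : ∀ v, ρx v = U v * ρ₀ * star (U v))
    (hρx' : ∀ v, ρx' v = U' v * ρ₀ * star (U' v))
    (D D' : Fin npar → Matrix (Fin n → Fin 2) (Fin n → Fin 2) ℂ)
    (hD : ∀ (l : Fin npar) (i j : Fin n → Fin 2),
      HasDerivAt (fun t : ℝ => ρx (Function.update θ l t) i j) (D l i j) (θ l))
    (hD' : ∀ (l : Fin npar) (i j : Fin n → Fin 2),
      HasDerivAt (fun t : ℝ => ρx' (Function.update θ l t) i j) (D' l i j) (θ l)) :
    ∑ l : Fin npar, (((2 : ℂ) • D l) * ((2 : ℂ) • D' l)).trace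
      = (2 : ℂ) ^ ((2 : ℤ) - (n : ℤ)) *
          ∑ s : Fin n → Fin 4, ∑ l : Fin npar,
            (D l * pauliString s).trace * (D' l * pauliString s).trace := by
  have key : ∀ l : Fin npar,
      ∑ s : Fin n → Fin 4, (D l * pauliString s).trace * (D' l * pauliString s).trace
        = (2 : ℂ) ^ n * (D l * D' l).trace := fun l => pauli_trace_expand (D l) (D' l)
  rw [Finset.sum_comm]
  simp_rw [key]
  rw [← Finset.mul_sum, ← mul_assoc]
  have h2 : (2 : ℂ) ^ ((2 : ℤ) - (n : ℤ)) * (2 : ℂ) ^ n = 4 := by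
    rw [← zpow_natCast (2 : ℂ) n, ← zpow_add₀ (two_ne_zero)]
    norm_num
  rw [h2]
  rw [Finset.mul_sum]
  refine Finset.sum_congr rfl fun l _ => ?_
  rw [Matrix.smul_mul, Matrix.mul_smul, smul_smul, Matrix.trace_smul]
  norm_num
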